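/- arXiv:1211.3942 — 2 statements merged into one kernel-verified Lean document; each statement's English description precedes it below -/
import Mathlib

section
/- Let Q₃ : ℝ^{3×3} → ℝ be a quadratic form that is positive semidefinite on all matrices and positive definite on symmetric matrices, and which depends only on the symmetric part of its argument (Q₃(F) = Q₃(sym F)). For F'' ∈ ℝ^{2×2}, define Q₂^{in}(F'') = min over d ∈ ℝ³ of Q₃(F'' + d ⊗ e₃ + e₃ ⊗ d) subject to the constraint Tr(F'' + d ⊗ e₃ + e₃ ⊗ d) = 0, where F'' is embedded as the principal 2×2 minor of a 3×3 matrix with all other entries zero. Then for every F'' the minimizer d(F'') exists and is unique, and the map F'' ↦ d(F'') is linear: d(F'' + G'') = d(F'') + d(G''). -/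
open Matrix

/-- The 3×3 matrix `F'' + d⊗e₃ + e₃⊗d`: principal 2×2 minor `F''`, third column/row given
by `d₁, d₂`, and `(3,3)` entry `2d₃`. -/
noncomputable def emb (F : Matrix (Fin 2) (Fin 2) ℝ) (d : Fin 3 → ℝ) :
    Matrix (Fin 3) (Fin 3) ℝ :=
  Matrix.of fun i j =>
    if hi : (i : ℕ) < 2 then
      if hj : (j : ℕ) < 2 then F ⟨i, hi⟩ ⟨j, hj⟩ else d i
    else if hj : (j : ℕ) < 2 then d j else 2 * d 2


lemma emb_add (F G : Matrix (Fin 2) (Fin 2) ℝ) (d e : Fin 3 → ℝ) :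
    emb (F + G) (d + e) = emb F d + emb G e := by
  ext i j
  fin_cases i <;> fin_cases j <;> simp [emb] <;> ring

lemma emb_decomp (F : Matrix (Fin 2) (Fin 2) ℝ) (d : Fin 3 → ℝ) :
    emb F d = emb F ![0, 0, d 2] + d 0 • emb 0 ![1,0,0] + d 1 • emb 0 ![0,1,0] := by
  ext i j
  fin_cases i <;> fin_cases j <;> simp [emb] <;> ring

lemma emb_combo (x₀ x₁ : ℝ) :
    x₀ • emb 0 ![1,0,0] + x₁ • emb 0 ![0,1,0] = emb 0 ![x₀, x₁, 0] := by
  ext i j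
  fin_cases i <;> fin_cases j <;> simp [emb]

lemma emb_isSymm (v : Fin 3 → ℝ) : (emb 0 v).IsSymm := by
  rw [Matrix.IsSymm]
  ext i j
  fin_cases i <;> fin_cases j <;> simp [emb]

lemma emb_ne_zero (v : Fin 3 → ℝ) (hv : v ≠ 0) : emb 0 v ≠ 0 := by
  intro h
  apply hv
  funext i
  fin_cases i
  · have := congrFun (congrFun h 0) 2; simpa [emb] using this
  · have := congrFun (congrFun h 1) 2; simpa [emb] using this
  · have := congrFun (congrFun h 2) 2
    simp [emb] at this
    simpa using this

lemma emb_trace (F : Matrix (Fin 2) (Fin 2) ℝ) (d : Fin 3 → ℝ) :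
    (emb F d).trace = F 0 0 + F 1 1 + 2 * d 2 := by
  simp [Matrix.trace, Fin.sum_univ_three, emb, Matrix.diag]

set_option maxHeartbeats 1000000 in
/-- **Existence, uniqueness and linearity of the minimizer in the definition of `Q₂ⁱⁿ`.**
Let `Q₃` be a quadratic form on `ℝ^{3×3}`, positive semidefinite, positive definite on
symmetric matrices, and depending only on the symmetric part. Then for every
`F'' ∈ ℝ^{2×2}` the constrained minimization
`min { Q₃(F'' + d⊗e₃ + e₃⊗d) : Tr(F'' + d⊗e₃ + e₃⊗d) = 0 }` has a unique minimizer
`d(F'')`, and the map `F'' ↦ d(F'')` is additive. -/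
theorem minimizer_exists_unique_linear
    (Q₃ : Matrix (Fin 3) (Fin 3) ℝ → ℝ)
    (B₃ : Matrix (Fin 3) (Fin 3) ℝ →ₗ[ℝ] Matrix (Fin 3) (Fin 3) ℝ →ₗ[ℝ] ℝ)
    (hB₃symm : ∀ F₁ F₂, B₃ F₁ F₂ = B₃ F₂ F₁)
    (hQ₃ : ∀ F, Q₃ F = B₃ F F)
    (hpsd : ∀ F, 0 ≤ Q₃ F)
    (hpd : ∀ F : Matrix (Fin 3) (Fin 3) ℝ, F.IsSymm → F ≠ 0 → 0 < Q₃ F)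
    (hsym : ∀ F : Matrix (Fin 3) (Fin 3) ℝ, Q₃ F = Q₃ ((1/2 : ℝ) • (F + Fᵀ))) :
    ∃ dmin : Matrix (Fin 2) (Fin 2) ℝ → (Fin 3 → ℝ),
      (∀ F'' : Matrix (Fin 2) (Fin 2) ℝ,
        (emb F'' (dmin F'')).trace = 0 ∧
        (∀ d : Fin 3 → ℝ, (emb F'' d).trace = 0 →
          Q₃ (emb F'' (dmin F'')) ≤ Q₃ (emb F'' d)) ∧
        (∀ d : Fin 3 → ℝ, (emb F'' d).trace = 0 →
          Q₃ (emb F'' d) ≤ Q₃ (emb F'' (dmin F'')) → d = dmin F'')) ∧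
      (∀ F'' G'' : Matrix (Fin 2) (Fin 2) ℝ, dmin (F'' + G'') = dmin F'' + dmin G'') := by
  classical
  set A₀ : Matrix (Fin 3) (Fin 3) ℝ := emb 0 ![1,0,0] with hA₀def
  set A₁ : Matrix (Fin 3) (Fin 3) ℝ := emb 0 ![0,1,0] with hA₁def
  set a : ℝ := B₃ A₀ A₀ with hadef
  set b : ℝ := B₃ A₀ A₁ with hbdef
  set c : ℝ := B₃ A₁ A₁ with hcdef
  have hba : B₃ A₁ A₀ = b := (hB₃symm A₁ A₀).trans hbdef.symm
  have expandB : ∀ x₀ x₁ : ℝ, B₃ (x₀ • A₀ + x₁ • A₁) (x₀ • A₀ + x₁ • A₁)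
      = x₀ * x₀ * a + 2 * (x₀ * x₁ * b) + x₁ * x₁ * c := by
    intro x₀ x₁
    simp only [map_add, _root_.map_smul, LinearMap.add_apply, LinearMap.smul_apply,
      smul_eq_mul, hba, ← hadef, ← hbdef, ← hcdef]
    ring
  have Qcombo : ∀ x₀ x₁ : ℝ, Q₃ (emb 0 ![x₀, x₁, 0])
      = x₀ * x₀ * a + 2 * (x₀ * x₁ * b) + x₁ * x₁ * c := by
    intro x₀ x₁
    rw [hQ₃, ← emb_combo, ← hA₀def, ← hA₁def, expandB]
  have pos : ∀ x₀ x₁ : ℝ, ¬ (x₀ = 0 ∧ x₁ = 0) →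
      0 < x₀ * x₀ * a + 2 * (x₀ * x₁ * b) + x₁ * x₁ * c := by
    intro x₀ x₁ hx
    have hv : (![x₀, x₁, 0] : Fin 3 → ℝ) ≠ 0 := by
      intro h
      exact hx ⟨by simpa using congrFun h 0, by simpa using congrFun h 1⟩
    have h1 : 0 < Q₃ (emb 0 ![x₀, x₁, 0]) :=
      hpd _ (emb_isSymm _) (emb_ne_zero _ hv)
    rwa [Qcombo] at h1
  have ha : 0 < a := by have := pos 1 0 (by simp); linarith
  have hdet : 0 < a * c - b * b := by
    have h := pos b (-a) (fun h => by exact absurd h.2 (by linarith))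
    nlinarith
  set det : ℝ := a * c - b * b with hdetdef
  have hdetne : det ≠ 0 := ne_of_gt hdet
  obtain ⟨dm, hdm⟩ : ∃ dm : Matrix (Fin 2) (Fin 2) ℝ → Fin 3 → ℝ, ∀ F, dm F =
      ![(b * B₃ (emb F ![0, 0, -(F 0 0 + F 1 1)/2]) A₁
          - c * B₃ (emb F ![0, 0, -(F 0 0 + F 1 1)/2]) A₀) / det,
        (b * B₃ (emb F ![0, 0, -(F 0 0 + F 1 1)/2]) A₀
          - a * B₃ (emb F ![0, 0, -(F 0 0 + F 1 1)/2]) A₁) / det,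
        -(F 0 0 + F 1 1)/2] := ⟨_, fun F => rfl⟩
  have hdm0 : ∀ F, dm F 0 = (b * B₃ (emb F ![0, 0, -(F 0 0 + F 1 1)/2]) A₁
      - c * B₃ (emb F ![0, 0, -(F 0 0 + F 1 1)/2]) A₀) / det := by
    intro F; rw [hdm]; simp
  have hdm1 : ∀ F, dm F 1 = (b * B₃ (emb F ![0, 0, -(F 0 0 + F 1 1)/2]) A₀
      - a * B₃ (emb F ![0, 0, -(F 0 0 + F 1 1)/2]) A₁) / det := by
    intro F; rw [hdm]; simp
  have hdm2 : ∀ F, dm F 2 = -(F 0 0 + F 1 1)/2 := by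
    intro F; rw [hdm]; simp
  have hdec : ∀ F, emb F (dm F) = emb F ![0, 0, -(F 0 0 + F 1 1)/2]
      + dm F 0 • A₀ + dm F 1 • A₁ := by
    intro F
    rw [hA₀def, hA₁def, ← hdm2 F]
    exact emb_decomp F (dm F)
  -- first order conditions
  have foc : ∀ F : Matrix (Fin 2) (Fin 2) ℝ,
      B₃ (emb F (dm F)) A₀ = 0 ∧ B₃ (emb F (dm F)) A₁ = 0 := by
    intro F
    set p : ℝ := B₃ (emb F ![0, 0, -(F 0 0 + F 1 1)/2]) A₀ with hp
    set q : ℝ := B₃ (emb F ![0, 0, -(F 0 0 + F 1 1)/2]) A₁ with hq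
    constructor
    · rw [hdec F]
      simp only [map_add, _root_.map_smul, LinearMap.add_apply, LinearMap.smul_apply,
        smul_eq_mul, hba, ← hadef, ← hp, hdm0 F, hdm1 F]
      field_simp
      ring
    · rw [hdec F]
      simp only [map_add, _root_.map_smul, LinearMap.add_apply, LinearMap.smul_apply,
        smul_eq_mul, ← hbdef, ← hcdef, ← hq, hdm0 F, hdm1 F]
      field_simp
      ring
  -- the key decomposition for a feasible d
  have key : ∀ (F : Matrix (Fin 2) (Fin 2) ℝ) (d : Fin 3 → ℝ), (emb F d).trace = 0 →
      Q₃ (emb F d) = Q₃ (emb F (dm F))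
        + Q₃ (emb 0 ![d 0 - dm F 0, d 1 - dm F 1, 0]) := by
    intro F d hd
    rw [emb_trace] at hd
    have hd2 : d 2 = dm F 2 := by rw [hdm2]; linarith
    have hsplit : emb F d = emb F (dm F)
        + (d 0 - dm F 0) • A₀ + (d 1 - dm F 1) • A₁ := by
      rw [hdec F, emb_decomp F d, hd2, hdm2 F, hA₀def, hA₁def]
      module
    have h0 := (foc F).1
    have h1 := (foc F).2
    have e0 : B₃ A₀ (emb F (dm F)) = 0 := by rw [hB₃symm]; exact h0
    have e1 : B₃ A₁ (emb F (dm F)) = 0 := by rw [hB₃symm]; exact h1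
    rw [hQ₃, hsplit, hQ₃, Qcombo]
    simp only [map_add, _root_.map_smul, LinearMap.add_apply, LinearMap.smul_apply,
      smul_eq_mul, h0, h1, e0, e1, hba, ← hadef, ← hbdef, ← hcdef, mul_zero, add_zero, zero_add]
    ring
  refine ⟨dm, fun F => ⟨?_, ?_, ?_⟩, ?_⟩
  · rw [emb_trace, hdm2]; ring
  · intro d hd
    have hk := key F d hd
    have hp := hpsd (emb 0 ![d 0 - dm F 0, d 1 - dm F 1, 0])
    linarith
  · intro d hd hle
    rw [key F d hd] at hle
    have hz : d 0 - dm F 0 = 0 ∧ d 1 - dm F 1 = 0 := by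
      by_contra hne
      have hpos := pos _ _ hne
      rw [Qcombo] at hle
      linarith
    have hd2 : d 2 = dm F 2 := by
      rw [emb_trace] at hd; rw [hdm2]; linarith
    funext i
    fin_cases i
    · simpa using sub_eq_zero.mp hz.1
    · simpa using sub_eq_zero.mp hz.2
    · simpa using hd2
  -- additivity
  · intro F G
    have hvec : (![0, 0, -((F + G) 0 0 + (F + G) 1 1)/2] : Fin 3 → ℝ)
        = ![0, 0, -(F 0 0 + F 1 1)/2] + ![0, 0, -(G 0 0 + G 1 1)/2] := by
      funext i
      fin_cases i <;> simp [Matrix.add_apply] <;> ring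
    have hembadd : emb (F + G) ![0, 0, -((F + G) 0 0 + (F + G) 1 1)/2]
        = emb F ![0, 0, -(F 0 0 + F 1 1)/2] + emb G ![0, 0, -(G 0 0 + G 1 1)/2] := by
      rw [hvec, emb_add]
    have k0 : dm (F + G) 0 = dm F 0 + dm G 0 := by
      rw [hdm0, hdm0, hdm0]
      simp only [hembadd, map_add, LinearMap.add_apply]
      field_simp
      ring
    have k1 : dm (F + G) 1 = dm F 1 + dm G 1 := by
      rw [hdm1, hdm1, hdm1]
      simp only [hembadd, map_add, LinearMap.add_apply]
      field_simp
      ring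
    have k2 : dm (F + G) 2 = dm F 2 + dm G 2 := by
      rw [hdm2, hdm2, hdm2, Matrix.add_apply, Matrix.add_apply]
      ring
    funext i
    fin_cases i
    · simpa using k0
    · simpa using k1
    · simpa using k2
end

section
/- Let W : ℝ^{3×3}_+ → [0, ∞) be C¹ on matrices with positive determinant and satisfy |DW(F)Fᵀ| ≤ C(W(F) + 1) for all F with det F > 0. Then there exists γ > 0 such that whenever A ∈ ℝ^{3×3} with det A > 0 and |A − Id| < γ, one has |DW(AF)Fᵀ| ≤ 3C(W(F) + 1) for all F with det F > 0. -/
open Matrix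

/-- The Frobenius norm `|G| = (∑ᵢⱼ Gᵢⱼ²)^{1/2}`. -/
noncomputable def frob (G : Matrix (Fin 3) (Fin 3) ℝ) : ℝ :=
  Real.sqrt (∑ i, ∑ j, (G i j) ^ 2)


section FrobHelpers

noncomputable def mE (G : Matrix (Fin 3) (Fin 3) ℝ) : EuclideanSpace ℝ (Fin 3 × Fin 3) :=
  (WithLp.equiv 2 _).symm fun p => G p.1 p.2

lemma frob_nonneg (G : Matrix (Fin 3) (Fin 3) ℝ) : 0 ≤ frob G := Real.sqrt_nonneg _

lemma frob_sq (G : Matrix (Fin 3) (Fin 3) ℝ) : frob G ^ 2 = ∑ i, ∑ j, (G i j) ^ 2 :=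
  Real.sq_sqrt (by positivity)

lemma frob_prod (G : Matrix (Fin 3) (Fin 3) ℝ) :
    frob G = Real.sqrt (∑ p : Fin 3 × Fin 3, (G p.1 p.2) ^ 2) := by
  rw [frob, Fintype.sum_prod_type]

lemma frob_eq_norm (G : Matrix (Fin 3) (Fin 3) ℝ) : frob G = ‖mE G‖ := by
  rw [EuclideanSpace.norm_eq, frob_prod]
  congr 1
  refine Finset.sum_congr rfl fun p _ => ?_
  rw [Real.norm_eq_abs, sq_abs]
  rfl

lemma frob_sub_le (X Y : Matrix (Fin 3) (Fin 3) ℝ) : frob (X - Y) ≤ frob X + frob Y := by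
  rw [frob_eq_norm, frob_eq_norm, frob_eq_norm]
  have : mE (X - Y) = mE X - mE Y := rfl
  rw [this]
  exact norm_sub_le _ _

lemma frob_smul (t : ℝ) (X : Matrix (Fin 3) (Fin 3) ℝ) : frob (t • X) = |t| * frob X := by
  rw [frob_eq_norm, frob_eq_norm]
  have : mE (t • X) = t • mE X := rfl
  rw [this, norm_smul, Real.norm_eq_abs]

lemma frob_transpose (X : Matrix (Fin 3) (Fin 3) ℝ) : frob Xᵀ = frob X := by
  rw [frob, frob, Finset.sum_comm]
  rfl

lemma frob_one : frob (1 : Matrix (Fin 3) (Fin 3) ℝ) = Real.sqrt 3 := by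
  rw [frob]
  congr 1
  simp [Matrix.one_apply, ite_pow]

lemma frob_mul_le (X Y : Matrix (Fin 3) (Fin 3) ℝ) : frob (X * Y) ≤ frob X * frob Y := by
  rw [frob, frob, frob, ← Real.sqrt_mul (by positivity)]
  apply Real.sqrt_le_sqrt
  calc ∑ i, ∑ j, ((X * Y) i j) ^ 2
      ≤ ∑ i, ∑ j, (∑ k, X i k ^ 2) * (∑ k, Y k j ^ 2) := by
        gcongr with i _ j _
        rw [Matrix.mul_apply]
        exact Finset.sum_mul_sq_le_sq_mul_sq _ _ _
    _ = (∑ i, ∑ j, X i j ^ 2) * (∑ i, ∑ j, Y i j ^ 2) := by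
        rw [Finset.sum_comm (s := Finset.univ) (f := fun i j => Y i j ^ 2)]
        rw [Finset.sum_mul_sum]

lemma trace_abs_le (X Y : Matrix (Fin 3) (Fin 3) ℝ) :
    |(Xᵀ * Y).trace| ≤ frob X * frob Y := by
  have h : (Xᵀ * Y).trace = ∑ p : Fin 3 × Fin 3, X p.1 p.2 * Y p.1 p.2 := by
    rw [Matrix.trace, Fintype.sum_prod_type]
    simp only [Matrix.diag, Matrix.mul_apply, Matrix.transpose_apply]
    exact Finset.sum_comm
  have h2 : ((Xᵀ * Y).trace) ^ 2
      ≤ (∑ p : Fin 3 × Fin 3, X p.1 p.2 ^ 2) * (∑ p : Fin 3 × Fin 3, Y p.1 p.2 ^ 2) := by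
    rw [h]
    exact Finset.sum_mul_sq_le_sq_mul_sq _ _ _
  calc |(Xᵀ * Y).trace| = Real.sqrt (((Xᵀ * Y).trace) ^ 2) := (Real.sqrt_sq_eq_abs _).symm
    _ ≤ Real.sqrt ((∑ p : Fin 3 × Fin 3, X p.1 p.2 ^ 2) * (∑ p : Fin 3 × Fin 3, Y p.1 p.2 ^ 2)) :=
        Real.sqrt_le_sqrt h2
    _ = frob X * frob Y := by rw [Real.sqrt_mul (by positivity), frob_prod, frob_prod]

lemma det_one_add_ne_zero {B : Matrix (Fin 3) (Fin 3) ℝ} (hB : frob B < 1) {t : ℝ}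
    (ht0 : 0 ≤ t) (ht1 : t ≤ 1) : (1 + t • B).det ≠ 0 := by
  intro h
  obtain ⟨v, hv0, hv⟩ := Matrix.exists_mulVec_eq_zero_iff.mpr h
  have hvec : ∀ i, v i + t * (B.mulVec v) i = 0 := by
    intro i
    have := congrFun hv i
    simpa [Matrix.add_mulVec, Matrix.one_mulVec, Matrix.smul_mulVec] using this
  have hS : (0:ℝ) < ∑ j, v j ^ 2 := by
    obtain ⟨j, hj⟩ := Function.ne_iff.mp hv0
    have h1 : v j ^ 2 ≤ ∑ j, v j ^ 2 :=
      Finset.single_le_sum (fun i _ => sq_nonneg (v i)) (Finset.mem_univ j)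
    have : 0 < v j ^ 2 := pow_two_pos_of_ne_zero hj
    linarith
  have hBv : ∑ i, (B.mulVec v) i ^ 2 ≤ (frob B) ^ 2 * ∑ j, v j ^ 2 := by
    rw [frob_sq, Finset.sum_mul]
    gcongr with i _
    rw [Matrix.mulVec, dotProduct]
    exact Finset.sum_mul_sq_le_sq_mul_sq _ _ _
  have hSS : ∑ j, v j ^ 2 = t ^ 2 * ∑ i, (B.mulVec v) i ^ 2 := by
    rw [Finset.mul_sum]
    refine Finset.sum_congr rfl fun i _ => ?_
    have hvi : v i = -(t * (B.mulVec v) i) := by linarith [hvec i]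
    rw [hvi]; ring
  have hfB : 0 ≤ frob B := frob_nonneg B
  have h4 := mul_le_mul_of_nonneg_left hBv (sq_nonneg t)
  have ht2 : t ^ 2 ≤ 1 := by nlinarith
  have hfB2 : (frob B) ^ 2 < 1 := by nlinarith
  nlinarith [mul_nonneg (sq_nonneg (frob B)) hS.le,
    mul_nonneg (mul_nonneg (sub_nonneg.mpr ht2) (sq_nonneg (frob B))) hS.le]

lemma det_one_add_pos {B : Matrix (Fin 3) (Fin 3) ℝ} (hB : frob B < 1) {t : ℝ}
    (ht0 : 0 ≤ t) (ht1 : t ≤ 1) : 0 < (1 + t • B).det := by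
  by_contra hle
  push_neg at hle
  have hne := det_one_add_ne_zero hB ht0 ht1
  have hlt : (1 + t • B).det < 0 := lt_of_le_of_ne hle hne
  have hcont : Continuous fun s : ℝ => (1 + s • B).det :=
    (continuous_const.add (continuous_id.smul continuous_const)).matrix_det
  have h0 : (1 + (0:ℝ) • B).det = 1 := by simp
  have := intermediate_value_Icc' ht0 hcont.continuousOn
  have h0mem : (0:ℝ) ∈ Set.Icc ((1 + t • B).det) ((1 + (0:ℝ) • B).det) := by
    rw [h0]; exact ⟨hlt.le, by norm_num⟩
  obtain ⟨c, hc, hc0⟩ := this h0mem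
  exact det_one_add_ne_zero hB hc.1 (le_trans hc.2 ht1) hc0

lemma frob_inv_le {M : Matrix (Fin 3) (Fin 3) ℝ} {r : ℝ} (hdet : M.det ≠ 0)
    (hr : frob (M - 1) ≤ r) (hr1 : r < 1) : frob M⁻¹ ≤ Real.sqrt 3 / (1 - r) := by
  have hu : IsUnit M.det := isUnit_iff_ne_zero.mpr hdet
  have h1 : M⁻¹ = 1 - (M - 1) * M⁻¹ := by
    rw [Matrix.sub_mul, Matrix.mul_nonsing_inv _ hu, Matrix.one_mul, sub_sub_cancel]
  have h2 : frob M⁻¹ ≤ Real.sqrt 3 + r * frob M⁻¹ := by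
    calc frob M⁻¹ = frob (1 - (M - 1) * M⁻¹) := by rw [← h1]
      _ ≤ frob 1 + frob ((M - 1) * M⁻¹) := frob_sub_le _ _
      _ ≤ Real.sqrt 3 + frob (M - 1) * frob M⁻¹ := by
          rw [frob_one]; gcongr; exact frob_mul_le _ _
      _ ≤ Real.sqrt 3 + r * frob M⁻¹ := by
          have := mul_le_mul_of_nonneg_right hr (frob_nonneg M⁻¹)
          linarith
  have h3 : 0 ≤ frob M⁻¹ := frob_nonneg _
  rw [le_div_iff₀ (by linarith)]
  nlinarith

end FrobHelpers

/-- **Ball's growth condition is stable near the identity (Lemma 2.2).** Let `W` be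
nonnegative and `C¹` on matrices with positive determinant, with (matrix-valued)
derivative `DW` satisfying `|DW(F)Fᵀ| ≤ C(W(F)+1)` whenever `det F > 0`. Then there is
`γ > 0` such that whenever `det A > 0`, `|A − Id| < γ` and `det F > 0`, one has
`|DW(AF)Fᵀ| ≤ 3C(W(F)+1)`. -/
theorem growth_condition_near_identity
    (W : Matrix (Fin 3) (Fin 3) ℝ → ℝ) (hWpos : ∀ F, 0 < F.det → 0 ≤ W F)
    (hWcont : ContinuousOn W {F : Matrix (Fin 3) (Fin 3) ℝ | 0 < F.det})
    (DW : Matrix (Fin 3) (Fin 3) ℝ → Matrix (Fin 3) (Fin 3) ℝ)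
    (hderiv : ∀ F, 0 < F.det → ∀ H : Matrix (Fin 3) (Fin 3) ℝ,
      HasDerivAt (fun t : ℝ => W (F + t • H)) (((DW F)ᵀ * H).trace) 0)
    (hDWcont : Continuous fun F : {F : Matrix (Fin 3) (Fin 3) ℝ // 0 < F.det} => DW F)
    (C : ℝ) (hC : 0 < C)
    (hgrowth : ∀ F, 0 < F.det → frob (DW F * Fᵀ) ≤ C * (W F + 1)) :
    ∃ γ > (0:ℝ), ∀ A F : Matrix (Fin 3) (Fin 3) ℝ, 0 < A.det → frob (A - 1) < γ →
      0 < F.det → frob (DW (A * F) * Fᵀ) ≤ 3 * C * (W F + 1) := by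
  set γ : ℝ := min (1/100) (1/(100*C)) with hγdef
  have hγ0 : 0 < γ := lt_min (by norm_num) (by positivity)
  refine ⟨γ, hγ0, fun A F hA hAγ hF => ?_⟩
  have hγ1 : γ ≤ 1/100 := min_le_left _ _
  have hCγ : C * γ ≤ 1/100 := by
    have h := min_le_right (1/100) (1/(100*C))
    calc C * γ ≤ C * (1/(100*C)) := by
          exact mul_le_mul_of_nonneg_left h hC.le
      _ = 1/100 := by field_simp
  -- basic quantities
  set s : ℝ := Real.sqrt 3 with hsdef
  have hs0 : 0 < s := Real.sqrt_pos.mpr (by norm_num)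
  have hs2 : s ^ 2 = 3 := Real.sq_sqrt (by norm_num)
  have hs18 : s ≤ 9/5 := by nlinarith
  have h1γ : (99:ℝ)/100 ≤ 1 - γ := by linarith
  have hM2 : s / (1 - γ) ≤ 2 := by
    rw [div_le_iff₀ (by linarith)]
    nlinarith
  have hM0 : 0 < s / (1 - γ) := by positivity
  set K0 : ℝ := C * γ * (s / (1 - γ)) with hK0def
  have hK0pos : 0 < K0 := by positivity
  have hK0le : K0 ≤ 1/50 := by
    calc K0 ≤ (1/100) * 2 := by
          apply mul_le_mul hCγ hM2 hM0.le (by norm_num)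
      _ = 1/50 := by norm_num
  have hexp : Real.exp K0 ≤ 50/49 := by
    have h := Real.add_one_le_exp (-K0)
    have hp := Real.exp_pos K0
    have h' : (-K0 + 1) * Real.exp K0 ≤ 1 := by
      have h2 := mul_le_mul_of_nonneg_right h hp.le
      rwa [← Real.exp_add, neg_add_cancel, Real.exp_zero] at h2
    nlinarith
  -- the segment
  set B : Matrix (Fin 3) (Fin 3) ℝ := A - 1 with hBdef
  have hBγ : frob B < γ := hAγ
  have hB1 : frob B < 1 := lt_of_lt_of_le hBγ (by linarith)
  have hψ : ∀ t : ℝ, (1 + t • B) * F = F + t • (B * F) := by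
    intro t
    rw [Matrix.add_mul, Matrix.one_mul, Matrix.smul_mul]
  have hA1B : (1 : Matrix (Fin 3) (Fin 3) ℝ) + B = A := by
    rw [hBdef, add_comm, sub_add_cancel]
  have hdetψ : ∀ t : ℝ, 0 ≤ t → t ≤ 1 → 0 < (F + t • (B * F)).det := by
    intro t ht0 ht1
    rw [← hψ, Matrix.det_mul]
    exact mul_pos (det_one_add_pos hB1 ht0 ht1) hF
  set g : ℝ → ℝ := fun t => W (F + t • (B * F)) with hgdef
  set D : ℝ → ℝ := fun t => ((DW (F + t • (B * F)))ᵀ * (B * F)).trace with hDdef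
  have hgnn : ∀ t : ℝ, 0 ≤ t → t ≤ 1 → 0 ≤ g t := fun t ht0 ht1 =>
    hWpos _ (hdetψ t ht0 ht1)
  -- continuity of g on [0,1]
  have hψcont : Continuous fun t : ℝ => F + t • (B * F) :=
    continuous_const.add (continuous_id.smul continuous_const)
  have hgc : ContinuousOn g (Set.Icc 0 1) := by
    apply hWcont.comp hψcont.continuousOn
    intro t ht
    exact hdetψ t ht.1 ht.2
  -- derivative of g
  have hg' : ∀ t ∈ Set.Ico (0:ℝ) 1, HasDerivAt g (D t) t := by
    intro t ht
    have h0 := hderiv _ (hdetψ t ht.1 ht.2.le) (B * F)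
    have h0' : HasDerivAt (fun u : ℝ => W ((F + t • (B * F)) + u • (B * F))) (D t) (t - t) := by
      rw [sub_self]; exact h0
    have comp := HasDerivAt.comp_of_eq t h0' ((hasDerivAt_id t).sub_const t) rfl
    have heq : (fun u : ℝ => W ((F + t • (B * F)) + u • (B * F))) ∘ (fun x : ℝ => id x - t) = g := by
      funext u
      simp only [Function.comp, id, hgdef]
      congr 1
      rw [add_assoc, ← add_smul]
      congr 2
      ring
    rw [heq, mul_one] at comp
    exact comp
  -- bound on D
  have hD : ∀ t : ℝ, 0 ≤ t → t ≤ 1 → |D t| ≤ K0 * |g t| + K0 := by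
    intro t ht0 ht1
    have hdet1 : (1 + t • B).det ≠ 0 := (det_one_add_pos hB1 ht0 ht1).ne'
    have hu : IsUnit (1 + t • B).det := isUnit_iff_ne_zero.mpr hdet1
    set N : Matrix (Fin 3) (Fin 3) ℝ := (1 + t • B)⁻¹ with hNdef
    have hNfrob : frob N ≤ s / (1 - γ) := by
      apply frob_inv_le hdet1 _ (by linarith)
      rw [add_sub_cancel_left, frob_smul, abs_of_nonneg ht0]
      calc t * frob B ≤ 1 * γ := by
            apply mul_le_mul ht1 hBγ.le (frob_nonneg _) (by norm_num)
        _ = γ := one_mul γ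
    have hkey : B * F = (B * N) * (F + t • (B * F)) := by
      rw [← hψ, ← Matrix.mul_assoc, Matrix.mul_assoc B N _,
        Matrix.nonsing_inv_mul _ hu, Matrix.mul_one]
    set G : Matrix (Fin 3) (Fin 3) ℝ := F + t • (B * F) with hGdef
    have hDt : D t = ((DW G * Gᵀ)ᵀ * (B * N)).trace := by
      show ((DW G)ᵀ * (B * F)).trace = _
      rw [hkey, Matrix.transpose_mul, Matrix.transpose_transpose, ← Matrix.mul_assoc,
        Matrix.trace_mul_cycle, ← Matrix.mul_assoc]
    have h1 : |D t| ≤ frob (DW G * Gᵀ) * frob (B * N) := by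
      rw [hDt]; exact trace_abs_le _ _
    have h2 : frob (DW G * Gᵀ) ≤ C * (g t + 1) := hgrowth G (hdetψ t ht0 ht1)
    have h3 : frob (B * N) ≤ γ * (s / (1 - γ)) := by
      calc frob (B * N) ≤ frob B * frob N := frob_mul_le _ _
        _ ≤ γ * (s / (1 - γ)) :=
            mul_le_mul hBγ.le hNfrob (frob_nonneg _) hγ0.le
    have hg0 : 0 ≤ g t := hgnn t ht0 ht1
    have habs : |g t| = g t := abs_of_nonneg hg0
    rw [habs]
    have h4 : frob (DW G * Gᵀ) * frob (B * N) ≤ (C * (g t + 1)) * (γ * (s / (1 - γ))) :=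
      mul_le_mul h2 h3 (frob_nonneg _) (by positivity)
    have : (C * (g t + 1)) * (γ * (s / (1 - γ))) = K0 * g t + K0 := by
      rw [hK0def]; ring
    linarith [h1, h4, this ▸ h4]
  -- Gronwall
  have hg0val : g 0 = W F := by simp [hgdef]
  have hGron := norm_le_gronwallBound_of_norm_deriv_right_le (f := g) (f' := D)
    (δ := W F) (K := K0) (ε := K0) (a := 0) (b := 1) hgc
    (fun x hx => (hg' x hx).hasDerivWithinAt)
    (by rw [Real.norm_eq_abs, hg0val, abs_of_nonneg (hWpos F hF)])
    (fun x hx => by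
      rw [Real.norm_eq_abs, Real.norm_eq_abs]
      exact hD x hx.1 hx.2.le)
  have hg1 := hGron 1 (by norm_num)
  rw [Real.norm_eq_abs, abs_of_nonneg (hgnn 1 zero_le_one le_rfl)] at hg1
  have hgb : gronwallBound (W F) K0 K0 (1 - 0) = W F * Real.exp K0 + (Real.exp K0 - 1) := by
    rw [gronwallBound_of_K_ne_0 hK0pos.ne']
    rw [div_self hK0pos.ne']
    norm_num
  rw [hgb] at hg1
  -- g 1 = W (A * F)
  have hψ1 : F + (1:ℝ) • (B * F) = A * F := by
    rw [← hψ, one_smul, hA1B]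
  have hWAF : W (A * F) ≤ W F * Real.exp K0 + (Real.exp K0 - 1) := by
    rw [← hψ1]
    calc W (F + (1:ℝ) • (B * F)) = g 1 := rfl
      _ ≤ _ := hg1
  -- final assembly
  have hdetAF : 0 < (A * F).det := by
    rw [Matrix.det_mul]; exact mul_pos hA hF
  have hAdet : A.det ≠ 0 := hA.ne'
  have hATdet : Aᵀ.det ≠ 0 := by rwa [Matrix.det_transpose]
  have hATu : IsUnit Aᵀ.det := isUnit_iff_ne_zero.mpr hATdet
  have hfact : DW (A * F) * Fᵀ = (DW (A * F) * (A * F)ᵀ) * (Aᵀ)⁻¹ := by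
    rw [Matrix.transpose_mul, ← Matrix.mul_assoc, Matrix.mul_assoc (DW (A * F) * Fᵀ) _ _,
      Matrix.mul_nonsing_inv _ hATu, Matrix.mul_one]
  have hAinv : frob (Aᵀ)⁻¹ ≤ s / (1 - γ) := by
    rw [← Matrix.transpose_nonsing_inv, frob_transpose]
    exact frob_inv_le hAdet hAγ.le (by linarith)
  have hWF1 : (0:ℝ) < W F + 1 := by linarith [hWpos F hF]
  calc frob (DW (A * F) * Fᵀ)
      = frob ((DW (A * F) * (A * F)ᵀ) * (Aᵀ)⁻¹) := by rw [← hfact]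
    _ ≤ frob (DW (A * F) * (A * F)ᵀ) * frob (Aᵀ)⁻¹ := frob_mul_le _ _
    _ ≤ (C * (W (A * F) + 1)) * (s / (1 - γ)) :=
        mul_le_mul (hgrowth _ hdetAF) hAinv (frob_nonneg _)
          (mul_nonneg hC.le (by linarith [hWpos _ hdetAF]))
    _ ≤ (C * ((W F + 1) * Real.exp K0)) * (s / (1 - γ)) := by
        have : W (A * F) + 1 ≤ (W F + 1) * Real.exp K0 := by
          rw [add_mul, one_mul]; linarith
        have h5 : C * (W (A * F) + 1) ≤ C * ((W F + 1) * Real.exp K0) :=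
          mul_le_mul_of_nonneg_left this hC.le
        exact mul_le_mul_of_nonneg_right h5 hM0.le
    _ ≤ 3 * C * (W F + 1) := by
        have hexp0 : 0 < Real.exp K0 := Real.exp_pos _
        nlinarith [mul_pos hC hWF1, mul_pos (mul_pos hC hWF1) hexp0]
end
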